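/- Let M1 and M2 be two multi-labeled phylogenetic trees (MUL-trees) on the same label set S. If their nested labels representations coincide as multisets, Υ(M1) = Υ(M2), then M1 and M2 are isomorphic as leaf-labeled rooted trees. -/

import Mathlib

open scoped Classical

/-- Nested-label encoding type at nesting depth `n` over atom type `A`. -/
def NLT (A : Type) : ℕ → Type :=
  fun n => Nat.rec A (fun _ ih => A ⊕ Multiset ih) n

/-- A multi-labeled phylogenetic tree (MUL-tree) over `S`: a finite rooted
tree whose leaves are labeled with nonempty subsets of `S`. -/
structure MulTree (S : Type) [Fintype S] : Type 1 where
  V : Type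
  fintypeV : Fintype V
  arc : V → V → Prop
  acyclic : ∀ v, ¬ Relation.TransGen arc v v
  root : V
  rootConn : ∀ v, Relation.ReflTransGen arc root v
  uniqueParent : ∀ v p q, arc p v → arc q v → p = q
  lab : V → Finset S
  labNonempty : ∀ v, (∀ w, ¬ arc v w) → (lab v).Nonempty

attribute [instance] MulTree.fintypeV

variable {S : Type} [Fintype S]

def MulTree.IsLeaf (M : MulTree S) (v : M.V) : Prop := ∀ w, ¬ M.arc v w

noncomputable def MulTree.children (M : MulTree S) (v : M.V) : Multiset M.V :=
  (Finset.univ.filter (fun w => M.arc v w)).val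

/-- The nested label of a node of a MUL-tree, encoded at depth `n`
(meaningful as soon as `n` exceeds the height of the node): a leaf gets its
label set, an internal node the multiset of its children's nested labels. -/
noncomputable def mulNL (M : MulTree S) : (n : ℕ) → M.V → NLT (Finset S) n
  | 0 => fun v => M.lab v
  | n+1 => fun v =>
      if M.IsLeaf v then Sum.inl (M.lab v)
      else Sum.inr ((M.children v).map (mulNL M n))

/-- A sufficient encoding depth for comparing nodes of two MUL-trees. -/
def mulFuel (M1 M2 : MulTree S) : ℕ := Fintype.card M1.V + Fintype.card M2.V

/-- `ℓ(u) = ℓ(v)` for nodes of MUL-trees. -/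
def mulSameNL (M1 M2 : MulTree S) (u : M1.V) (v : M2.V) : Prop :=
  ∀ n, mulFuel M1 M2 ≤ n → mulNL M1 n u = mulNL M2 n v

/-- Symmetric difference of multisets. -/
noncomputable def msd {X : Type*} (M1 M2 : Multiset X) : Multiset X :=
  (M1 - M2) + (M2 - M1)

/-- The nested labels representation `Υ(M)` (at encoding depth `n`). -/
noncomputable def mulUpsilon (M : MulTree S) (n : ℕ) : Multiset (NLT (Finset S) n) :=
  Finset.univ.val.map (mulNL M n)

/-- Isomorphism of MUL-trees: a rooted-tree isomorphism preserving the leaf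
label sets. -/
def MulIso (M1 M2 : MulTree S) : Prop :=
  ∃ e : M1.V ≃ M2.V, (∀ u v, M1.arc u v ↔ M2.arc (e u) (e v)) ∧
    e M1.root = M2.root ∧
    ∀ v, M1.IsLeaf v → M2.lab (e v) = M1.lab v

namespace MulTree

variable (M : MulTree S)

/-- Reachability. -/
abbrev reach (M : MulTree S) : M.V → M.V → Prop := Relation.ReflTransGen M.arc

noncomputable def childFS (M : MulTree S) (v : M.V) : Finset M.V :=
  Finset.univ.filter (fun w => M.arc v w)

lemma mem_childFS {M : MulTree S} {v w : M.V} : w ∈ M.childFS v ↔ M.arc v w := by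
  simp [childFS]

lemma children_eq (M : MulTree S) (v : M.V) : M.children v = (M.childFS v).val := rfl

lemma wfc (M : MulTree S) : WellFounded (fun w v => M.arc v w) := by
  have hi : IsIrrefl M.V (Relation.TransGen (fun w v => M.arc v w)) := by
    constructor
    intro v hv
    exact M.acyclic v ((Relation.transGen_swap).mp hv)
  have hw := Finite.wellFounded_of_trans_of_irrefl (Relation.TransGen (fun w v => M.arc v w))
  exact Subrelation.wf (r := Relation.TransGen fun w v => M.arc v w) (q := fun w v => M.arc v w) (fun h => Relation.TransGen.single h) hw

noncomputable def hgt (M : MulTree S) : M.V → ℕ :=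
  M.wfc.fix (fun v ih =>
    (M.childFS v).attach.sup (fun w => ih w.1 (mem_childFS.mp w.2) + 1))

lemma hgt_eq (v : M.V) : M.hgt v = (M.childFS v).sup (fun w => M.hgt w + 1) := by
  rw [hgt, WellFounded.fix_eq]
  exact Finset.sup_attach (M.childFS v) (fun w => M.hgt w + 1)

lemma hgt_lt_of_arc {M : MulTree S} {v w : M.V} (h : M.arc v w) : M.hgt w < M.hgt v := by
  have h2 : M.hgt w + 1 ≤ M.hgt v := by
    rw [hgt_eq M v]
    exact Finset.le_sup (f := fun w => M.hgt w + 1) (mem_childFS.mpr h)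
  omega

lemma leaf_iff_childFS {M : MulTree S} {v : M.V} : M.IsLeaf v ↔ M.childFS v = ∅ := by
  simp [IsLeaf, Finset.eq_empty_iff_forall_notMem, mem_childFS]

lemma leaf_of_hgt_zero {M : MulTree S} {v : M.V} (h : M.hgt v = 0) : M.IsLeaf v := by
  rw [leaf_iff_childFS]
  by_contra hne
  obtain ⟨w, hw⟩ := Finset.nonempty_iff_ne_empty.mpr hne
  have h2 : M.hgt w + 1 ≤ M.hgt v := by
    rw [hgt_eq M v]
    exact Finset.le_sup (f := fun w => M.hgt w + 1) hw
  omega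

lemma hgt_zero_of_leaf {M : MulTree S} {v : M.V} (h : M.IsLeaf v) : M.hgt v = 0 := by
  rw [hgt_eq, leaf_iff_childFS.mp h]
  simp

lemma hgt_le_of_reach {M : MulTree S} {v w : M.V} (h : M.reach v w) : M.hgt w ≤ M.hgt v := by
  induction h with
  | refl => exact le_refl _
  | tail _ ha ih => exact le_trans (le_of_lt (hgt_lt_of_arc ha)) ih

lemma hgt_lt_of_transGen {M : MulTree S} {v w : M.V} (h : Relation.TransGen M.arc v w) :
    M.hgt w < M.hgt v := by
  induction h with
  | single ha => exact hgt_lt_of_arc ha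
  | tail _ ha ih => exact lt_trans (hgt_lt_of_arc ha) ih

noncomputable def descFS (M : MulTree S) (v : M.V) : Finset M.V :=
  Finset.univ.filter (fun w => M.reach v w)

lemma hgt_lt_descCard (M : MulTree S) (v : M.V) : M.hgt v < (M.descFS v).card := by
  generalize hk : M.hgt v = k
  induction k using Nat.strong_induction_on generalizing v with
  | _ k ih =>
    have hv : v ∈ M.descFS v := by simp [descFS, Relation.ReflTransGen.refl]
    rcases Nat.eq_zero_or_pos k with h0 | hpos
    · subst h0; exact Finset.card_pos.mpr ⟨v, hv⟩
    · -- sup attained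
      have hne : (M.childFS v).Nonempty := by
        by_contra hne
        rw [Finset.not_nonempty_iff_eq_empty] at hne
        rw [hgt_eq, hne] at hk
        simp at hk
        omega
      obtain ⟨w, hwmem, hweq⟩ := Finset.exists_mem_eq_sup _ hne (fun w => M.hgt w + 1)
      have hk2 : k = M.hgt w + 1 := by rw [← hk, hgt_eq]; exact hweq
      have harc : M.arc v w := mem_childFS.mp hwmem
      have hsub : M.descFS w ⊆ (M.descFS v).erase v := by
        intro x hx
        simp only [descFS, Finset.mem_filter, Finset.mem_univ, true_and] at hx
        rw [Finset.mem_erase]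
        constructor
        · rintro rfl
          exact M.acyclic x (Relation.TransGen.head' harc hx)
        · simp only [descFS, Finset.mem_filter, Finset.mem_univ, true_and]
          exact Relation.ReflTransGen.head harc hx
      have hcard : (M.descFS w).card ≤ (M.descFS v).card - 1 := by
        have := Finset.card_le_card hsub
        rwa [Finset.card_erase_of_mem hv] at this
      have := ih (M.hgt w) (by omega) w rfl
      have hvcard : 0 < (M.descFS v).card := Finset.card_pos.mpr ⟨v, hv⟩
      omega

lemma hgt_lt_card (M : MulTree S) (v : M.V) : M.hgt v < Fintype.card M.V :=
  lt_of_lt_of_le (M.hgt_lt_descCard v) (Finset.card_le_card (Finset.subset_univ _))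

lemma not_arc_root {M : MulTree S} {u : M.V} : ¬ M.arc u M.root := by
  intro h
  exact M.acyclic M.root (Relation.TransGen.tail' (M.rootConn u) h)

lemma reach_comparable {M : MulTree S} {a b v : M.V} (ha : M.reach a v) (hb : M.reach b v) :
    M.reach a b ∨ M.reach b a := by
  induction ha with
  | refl => exact Or.inr hb
  | @tail w v hseg harc ih =>
    rcases Relation.ReflTransGen.cases_tail hb with h | ⟨p, hbp, hpv⟩
    · subst h; exact Or.inl (hseg.tail harc)
    · have : p = w := M.uniqueParent _ _ _ hpv harc
      subst this
      exact ih hbp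

lemma exists_root_child {M : MulTree S} {v : M.V} (hv : v ≠ M.root) :
    ∃ c, M.arc M.root c ∧ M.reach c v := by
  rcases Relation.ReflTransGen.cases_head (M.rootConn v) with h | ⟨c, hc, hcv⟩
  · exact absurd h.symm hv
  · exact ⟨c, hc, hcv⟩

lemma root_child_unique {M : MulTree S} {v c c' : M.V} (hc : M.arc M.root c)
    (hcv : M.reach c v) (hc' : M.arc M.root c') (hc'v : M.reach c' v) : c = c' := by
  have key : ∀ {x y : M.V}, M.arc M.root x → M.arc M.root y → M.reach x y → x = y := by
    intro x y hx hy hxy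
    rcases Relation.ReflTransGen.cases_tail hxy with h | ⟨p, hxp, hpy⟩
    · exact h.symm
    · have : p = M.root := M.uniqueParent _ _ _ hpy hy
      subst this
      exact absurd (Relation.TransGen.head' hx hxp) (M.acyclic M.root)
  rcases reach_comparable hcv hc'v with h | h
  · exact key hc hc' h
  · exact (key hc' hc h).symm

end MulTree
/-! ### Lifting and rank of nested-label encodings -/

def nlift {A : Type} : (n : ℕ) → NLT A n → NLT A (n+1)
  | 0 => fun a => Sum.inl a
  | n+1 => fun x =>
      match (x : A ⊕ Multiset (NLT A n)) with
      | Sum.inl a => Sum.inl a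
      | Sum.inr m => Sum.inr (m.map (nlift n))

lemma nlift_injective {A : Type} : ∀ n, Function.Injective (nlift (A := A) n)
  | 0 => fun a b h => by
      have : (Sum.inl a : A ⊕ Multiset (NLT A 0)) = Sum.inl b := h
      exact Sum.inl.inj this
  | n+1 => fun x y h => by
      match (x : A ⊕ Multiset (NLT A n)), (y : A ⊕ Multiset (NLT A n)), h with
      | Sum.inl a, Sum.inl b, h =>
          have : (Sum.inl a : A ⊕ Multiset (NLT A (n+1))) = Sum.inl b := h
          exact congrArg Sum.inl (Sum.inl.inj this)
      | Sum.inr m, Sum.inr m', h =>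
          have h2 : (Sum.inr (m.map (nlift n)) : A ⊕ Multiset (NLT A (n+1)))
              = Sum.inr (m'.map (nlift n)) := h
          exact congrArg Sum.inr (Multiset.map_injective (nlift_injective n) (Sum.inr.inj h2))

def nliftK {A : Type} (n : ℕ) : (k : ℕ) → NLT A n → NLT A (n+k)
  | 0 => id
  | k+1 => fun x => nlift (n+k) (nliftK n k x)

lemma nliftK_injective {A : Type} (n : ℕ) : ∀ k, Function.Injective (nliftK (A := A) n k)
  | 0 => fun _ _ h => h
  | k+1 => fun x y h => nliftK_injective n k (nlift_injective (n+k) h)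

lemma sup_add_one {α : Type*} {s : Finset α} (hne : s.Nonempty) {f : α → ℕ} :
    s.sup (fun a => f a + 1) = s.sup f + 1 := by
  rw [← Finset.sup'_eq_sup hne, ← Finset.sup'_eq_sup hne]
  exact (Finset.comp_sup'_eq_sup'_comp hne (fun x : ℕ => x + 1)
    (fun x y => (Nat.succ_max_succ x y).symm)).symm

noncomputable def nrank : (n : ℕ) → NLT (Finset S) n → ℕ
  | 0 => fun _ => 0
  | n+1 => fun x =>
      match (x : Finset S ⊕ Multiset (NLT (Finset S) n)) with
      | Sum.inl _ => 0
      | Sum.inr m => (m.map (nrank n)).sup + 1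

namespace MulTree

lemma mulNL_zero (M : MulTree S) (v : M.V) : mulNL M 0 v = M.lab v := rfl

lemma mulNL_succ (M : MulTree S) (n : ℕ) (v : M.V) :
    mulNL M (n+1) v = if M.IsLeaf v then Sum.inl (M.lab v)
      else Sum.inr ((M.children v).map (mulNL M n)) := rfl

lemma mulNL_stable (M : MulTree S) : ∀ (n : ℕ) (v : M.V), M.hgt v ≤ n →
    mulNL M (n+1) v = nlift n (mulNL M n v) := by
  intro n
  induction n with
  | zero =>
      intro v hv
      have hleaf : M.IsLeaf v := leaf_of_hgt_zero (Nat.le_zero.mp hv)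
      rw [mulNL_succ, if_pos hleaf]
      rfl
  | succ n ih =>
      intro v hv
      by_cases hleaf : M.IsLeaf v
      · rw [mulNL_succ, if_pos hleaf, mulNL_succ, if_pos hleaf]
        rfl
      · rw [mulNL_succ, if_neg hleaf, mulNL_succ M n v, if_neg hleaf]
        show Sum.inr _ = Sum.inr (Multiset.map (nlift n) _)
        rw [Multiset.map_map]
        congr 1
        apply Multiset.map_congr rfl
        intro w hw
        rw [children_eq] at hw
        have harc : M.arc v w := mem_childFS.mp hw
        exact ih w (by have := hgt_lt_of_arc harc; omega)

lemma mulNL_stableK (M : MulTree S) (n : ℕ) (v : M.V) (hv : M.hgt v ≤ n) :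
    ∀ k, mulNL M (n+k) v = nliftK n k (mulNL M n v) := by
  intro k
  induction k with
  | zero => rfl
  | succ k ih =>
      show mulNL M ((n+k)+1) v = nlift (n+k) (nliftK n k (mulNL M n v))
      rw [mulNL_stable M (n+k) v (le_trans hv (Nat.le_add_right n k)), ih]

lemma nrank_mulNL (M : MulTree S) : ∀ (n : ℕ) (v : M.V), M.hgt v ≤ n →
    nrank n (mulNL M n v) = M.hgt v := by
  intro n
  induction n with
  | zero =>
      intro v hv
      have h0 : M.hgt v = 0 := Nat.le_zero.mp hv
      rw [h0]
      rfl
  | succ n ih =>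
      intro v hv
      by_cases hleaf : M.IsLeaf v
      · rw [mulNL_succ, if_pos hleaf]
        show 0 = M.hgt v
        exact (hgt_zero_of_leaf hleaf).symm
      · rw [mulNL_succ, if_neg hleaf]
        show ((Multiset.map (mulNL M n) (M.children v)).map (nrank n)).sup + 1 = M.hgt v
        rw [Multiset.map_map]
        have hmap : Multiset.map (nrank n ∘ mulNL M n) (M.children v)
            = Multiset.map (M.hgt) (M.children v) := by
          apply Multiset.map_congr rfl
          intro w hw
          rw [children_eq] at hw
          have harc : M.arc v w := mem_childFS.mp hw
          exact ih w (by have := hgt_lt_of_arc harc; omega)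
        rw [hmap]
        -- sup of heights of children + 1 = hgt v
        have hne : (M.childFS v).Nonempty := by
          rw [Finset.nonempty_iff_ne_empty]
          intro hemp
          exact hleaf (leaf_iff_childFS.mpr hemp)
        rw [children_eq, ← Finset.sup_def, hgt_eq M v, sup_add_one hne]

end MulTree
namespace MulTree

lemma child_ne_root {M : MulTree S} {c : M.V} (h : M.arc M.root c) : c ≠ M.root := by
  rintro rfl
  exact M.acyclic M.root (Relation.TransGen.single h)

lemma transGen_of_reach_ne {M : MulTree S} {a b : M.V} (h : M.reach a b) (hne : a ≠ b) :
    Relation.TransGen M.arc a b := by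
  rcases Relation.ReflTransGen.cases_head h with h' | ⟨c, hac, hcb⟩
  · exact absurd h' hne
  · exact Relation.TransGen.head' hac hcb

lemma not_reach_root {M : MulTree S} {v : M.V} (hv : v ≠ M.root) : ¬ M.reach v M.root := by
  intro h
  exact M.acyclic M.root (Relation.TransGen.trans_right (M.rootConn v) (transGen_of_reach_ne h hv))

/-- The subtree of `M` rooted at `v`. -/
noncomputable def sub (M : MulTree S) (v : M.V) : MulTree S where
  V := {w // M.reach v w}
  fintypeV := Fintype.ofFinite _
  arc x y := M.arc x.1 y.1
  acyclic x h := M.acyclic x.1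
    (Relation.TransGen.lift (Subtype.val) (fun _ _ hh => hh) _ _ h)
  root := ⟨v, Relation.ReflTransGen.refl⟩
  rootConn := by
    rintro ⟨w, hw⟩
    induction hw with
    | refl => exact Relation.ReflTransGen.refl
    | @tail b w hseg harc ih =>
        exact Relation.ReflTransGen.tail ih harc
  uniqueParent w p q hp hq := Subtype.ext (M.uniqueParent w.1 p.1 q.1 hp hq)
  lab w := M.lab w.1
  labNonempty w hw := M.labNonempty w.1 (fun x hx => hw ⟨x, w.2.tail hx⟩ hx)

variable (M : MulTree S) (v : M.V)

lemma sub_root : (M.sub v).root = ⟨v, Relation.ReflTransGen.refl⟩ := rfl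

lemma sub_arc (x y : (M.sub v).V) : (M.sub v).arc x y ↔ M.arc x.1 y.1 := Iff.rfl

lemma sub_lab (x : (M.sub v).V) : (M.sub v).lab x = M.lab x.1 := rfl

lemma sub_isLeaf (x : (M.sub v).V) : (M.sub v).IsLeaf x ↔ M.IsLeaf x.1 := by
  constructor
  · intro hl y hy
    exact hl ⟨y, x.2.tail hy⟩ hy
  · intro hl y hy
    exact hl y.1 hy

lemma sub_childFS (x : (M.sub v).V) :
    ((M.sub v).childFS x).map (Function.Embedding.subtype _) = M.childFS x.1 := by
  ext y
  constructor
  · intro hy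
    obtain ⟨⟨z, hz⟩, hmem, rfl⟩ := Finset.mem_map.mp hy
    exact mem_childFS.mpr ((mem_childFS (M := M.sub v)).mp hmem)
  · intro hy
    exact Finset.mem_map.mpr ⟨⟨y, x.2.tail (mem_childFS.mp hy)⟩, (mem_childFS (M := M.sub v)).mpr ((mem_childFS (M := M)).mp hy), rfl⟩

lemma sub_children (x : (M.sub v).V) :
    ((M.sub v).children x).map Subtype.val = M.children x.1 := by
  rw [children_eq, children_eq, ← sub_childFS M v x]
  exact (Finset.map_val (Function.Embedding.subtype fun w => M.reach v w) ((M.sub v).childFS x)).symm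

lemma mulNL_sub : ∀ (n : ℕ) (x : (M.sub v).V), mulNL (M.sub v) n x = mulNL M n x.1 := by
  intro n
  induction n with
  | zero => intro x; rfl
  | succ n ih =>
      intro x
      by_cases hl : (M.sub v).IsLeaf x
      · rw [mulNL_succ, if_pos hl, mulNL_succ, if_pos ((sub_isLeaf M v x).mp hl)]
        rfl
      · rw [mulNL_succ, if_neg hl, mulNL_succ, if_neg (fun hh => hl ((sub_isLeaf M v x).mpr hh))]
        congr 1
        rw [← sub_children M v x]
        refine Eq.trans ?_ (Multiset.map_map _ _ _).symm
        apply Multiset.map_congr rfl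
        intro z _
        exact ih z
    
lemma hgt_sub : ∀ (x : (M.sub v).V), (M.sub v).hgt x = M.hgt x.1 := by
  intro x
  generalize hk : M.hgt x.1 = k
  induction k using Nat.strong_induction_on generalizing x with
  | _ k ihk =>
    subst hk
    rw [hgt_eq, hgt_eq, ← sub_childFS M v x]
    refine Eq.trans ?_ (Finset.sup_map _ _ _).symm
    apply Finset.sup_congr rfl
    intro c hc
    have harc : M.arc x.1 c.1 := (mem_childFS (M := M.sub v)).mp hc
    simp only [Function.comp, Function.Embedding.coe_subtype]
    rw [ihk (M.hgt c.1) (hgt_lt_of_arc harc) c rfl]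

lemma card_sub_lt (hv : v ≠ M.root) : Fintype.card (M.sub v).V < Fintype.card M.V := by
  have : ¬ M.reach v M.root := not_reach_root hv
  have h2 := Fintype.card_subtype_lt (p := fun w => M.reach v w) this
  exact lt_of_eq_of_lt (@Fintype.card_congr _ _ (M.sub v).fintypeV (Subtype.fintype _) (Equiv.refl _)) h2

end MulTree
lemma rel_nodup_equiv {α β : Type*} {R : α → β → Prop} :
    ∀ {s : Multiset α} {t : Multiset β}, Multiset.Rel R s t → s.Nodup → t.Nodup →
    ∃ e : {x // x ∈ s} ≃ {y // y ∈ t}, ∀ x, R x.1 (e x).1 := by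
  intro s t h
  induction h with
  | zero =>
      intro _ _
      have h1 : IsEmpty {x // x ∈ (0 : Multiset α)} :=
        ⟨fun x => Multiset.notMem_zero x.1 x.2⟩
      have h2 : IsEmpty {y // y ∈ (0 : Multiset β)} :=
        ⟨fun y => Multiset.notMem_zero y.1 y.2⟩
      exact ⟨Equiv.equivOfIsEmpty _ _, fun x => isEmptyElim x⟩
  | @cons a b s t hab hst ih =>
      intro hs ht
      have hs' := Multiset.nodup_cons.mp hs
      have ht' := Multiset.nodup_cons.mp ht
      obtain ⟨e, he⟩ := ih hs'.2 ht'.2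
      let f : {x // x ∈ a ::ₘ s} → {y // y ∈ b ::ₘ t} := fun x =>
        if hx : x.1 = a then ⟨b, Multiset.mem_cons_self b t⟩
        else ⟨(e ⟨x.1, (Multiset.mem_cons.mp x.2).resolve_left hx⟩).1,
          Multiset.mem_cons_of_mem (e ⟨x.1, (Multiset.mem_cons.mp x.2).resolve_left hx⟩).2⟩
      have hbij : Function.Bijective f := by
        constructor
        · intro x y hxy
          by_cases hx : x.1 = a <;> by_cases hy : y.1 = a
          · exact Subtype.ext (hx.trans hy.symm)
          · exfalso
            have : f x = ⟨b, Multiset.mem_cons_self b t⟩ := dif_pos hx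
            rw [this] at hxy
            have h2 : (f y).1 ∈ t := by
              have : f y = ⟨(e ⟨y.1, _⟩).1, _⟩ := dif_neg hy
              rw [this]
              exact (e _).2
            rw [← hxy] at h2
            exact ht'.1 h2
          · exfalso
            have : f y = ⟨b, Multiset.mem_cons_self b t⟩ := dif_pos hy
            rw [this] at hxy
            have h2 : (f x).1 ∈ t := by
              have : f x = ⟨(e ⟨x.1, _⟩).1, _⟩ := dif_neg hx
              rw [this]
              exact (e _).2
            rw [hxy] at h2
            exact ht'.1 h2
          · have hfx : f x = ⟨(e ⟨x.1, _⟩).1, _⟩ := dif_neg hx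
            have hfy : f y = ⟨(e ⟨y.1, _⟩).1, _⟩ := dif_neg hy
            rw [hfx, hfy] at hxy
            have hv : (e ⟨x.1, (Multiset.mem_cons.mp x.2).resolve_left hx⟩).1
                = (e ⟨y.1, (Multiset.mem_cons.mp y.2).resolve_left hy⟩).1 :=
              Subtype.mk_eq_mk.mp hxy
            have h4 := e.injective (Subtype.ext hv)
            exact Subtype.ext (Subtype.mk_eq_mk.mp h4)
        · intro y
          by_cases hy : y.1 = b
          · refine ⟨⟨a, Multiset.mem_cons_self a s⟩, ?_⟩
            have : f ⟨a, Multiset.mem_cons_self a s⟩ = ⟨b, Multiset.mem_cons_self b t⟩ :=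
              dif_pos rfl
            rw [this]
            exact Subtype.ext hy.symm
          · have hyt : y.1 ∈ t := (Multiset.mem_cons.mp y.2).resolve_left hy
            let z := e.symm ⟨y.1, hyt⟩
            refine ⟨⟨z.1, Multiset.mem_cons_of_mem z.2⟩, ?_⟩
            have hza : z.1 ≠ a := fun hz => hs'.1 (hz ▸ z.2)
            have : f ⟨z.1, Multiset.mem_cons_of_mem z.2⟩
                = ⟨(e ⟨z.1, _⟩).1, _⟩ := dif_neg hza
            rw [this]
            apply Subtype.ext
            show (e ⟨z.1, _⟩).1 = y.1
            have hz2 : (⟨z.1, _⟩ : {x // x ∈ s}) = z := Subtype.ext rfl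
            rw [hz2]
            show (e (e.symm ⟨y.1, hyt⟩)).1 = y.1
            rw [e.apply_symm_apply]
      refine ⟨Equiv.ofBijective f hbij, ?_⟩
      intro x
      show R x.1 (f x).1
      by_cases hx : x.1 = a
      · have : f x = ⟨b, Multiset.mem_cons_self b t⟩ := dif_pos hx
        rw [this, hx]
        exact hab
      · have : f x = ⟨(e ⟨x.1, _⟩).1, _⟩ := dif_neg hx
        rw [this]
        exact he ⟨x.1, (Multiset.mem_cons.mp x.2).resolve_left hx⟩
open MulTree in
lemma mul_iso_of_same_root_nl :
    ∀ (k : ℕ) (M1 M2 : MulTree S), Fintype.card M1.V = k →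
    (∃ n, M1.hgt M1.root ≤ n ∧ M2.hgt M2.root ≤ n ∧
      mulNL M1 n M1.root = mulNL M2 n M2.root) →
    MulIso M1 M2 := by
  intro k
  induction k using Nat.strong_induction_on with
  | _ k IH =>
  intro M1 M2 hcard hex
  obtain ⟨n, h1, h2, heq⟩ := hex
  by_cases hleaf : M1.IsLeaf M1.root
  · -- both trees are singletons
    have hl2lab : M2.IsLeaf M2.root ∧ M1.lab M1.root = M2.lab M2.root := by
      cases n with
      | zero => exact ⟨leaf_of_hgt_zero (Nat.le_zero.mp h2), heq⟩
      | succ m =>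
          by_cases hl2 : M2.IsLeaf M2.root
          · rw [mulNL_succ, if_pos hleaf, mulNL_succ, if_pos hl2] at heq
            exact ⟨hl2, Sum.inl.inj heq⟩
          · rw [mulNL_succ, if_pos hleaf, mulNL_succ, if_neg hl2] at heq
            exact absurd heq (by simp)
    obtain ⟨hleaf2, hlab⟩ := hl2lab
    have huniq1 : ∀ v : M1.V, v = M1.root := by
      intro v
      rcases Relation.ReflTransGen.cases_head (M1.rootConn v) with h | ⟨c, hc, _⟩
      · exact h.symm
      · exact absurd hc (hleaf c)
    have huniq2 : ∀ v : M2.V, v = M2.root := by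
      intro v
      rcases Relation.ReflTransGen.cases_head (M2.rootConn v) with h | ⟨c, hc, _⟩
      · exact h.symm
      · exact absurd hc (hleaf2 c)
    refine ⟨⟨fun _ => M2.root, fun _ => M1.root,
      fun v => (huniq1 v).symm, fun w => (huniq2 w).symm⟩, ?_, rfl, ?_⟩
    · intro u v
      constructor
      · intro h
        rw [huniq1 u] at h
        exact absurd h (hleaf v)
      · intro h
        exact absurd h (hleaf2 M2.root)
    · intro v _
      show M2.lab M2.root = M1.lab v
      rw [huniq1 v]
      exact hlab.symm
  · -- internal case
    cases n with
    | zero => exact absurd (leaf_of_hgt_zero (Nat.le_zero.mp h1)) hleaf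
    | succ m =>
    have hleaf2 : ¬ M2.IsLeaf M2.root := by
      intro hl2
      rw [mulNL_succ, if_neg hleaf, mulNL_succ, if_pos hl2] at heq
      exact absurd heq (by simp)
    rw [mulNL_succ, if_neg hleaf, mulNL_succ, if_neg hleaf2] at heq
    have hmap : Multiset.map (mulNL M1 m) (M1.children M1.root)
        = Multiset.map (mulNL M2 m) (M2.children M2.root) := Sum.inr.inj heq
    have hrel : Multiset.Rel (fun a b => mulNL M1 m a = mulNL M2 m b)
        (M1.children M1.root) (M2.children M2.root) :=
      Multiset.rel_map.mp (Multiset.rel_eq.mpr hmap)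
    have hnodup1 : (M1.children M1.root).Nodup := (M1.childFS M1.root).nodup
    have hnodup2 : (M2.children M2.root).Nodup := (M2.childFS M2.root).nodup
    obtain ⟨σ, hσ⟩ := rel_nodup_equiv hrel hnodup1 hnodup2
    have harc1 : ∀ c : {x // x ∈ M1.children M1.root}, M1.arc M1.root c.1 :=
      fun c => mem_childFS.mp (Finset.mem_val.mp c.2)
    have harc2 : ∀ d : {y // y ∈ M2.children M2.root}, M2.arc M2.root d.1 :=
      fun d => mem_childFS.mp (Finset.mem_val.mp d.2)
    have hgtc1 : ∀ c : {x // x ∈ M1.children M1.root}, M1.hgt c.1 ≤ m := by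
      intro c
      have := hgt_lt_of_arc (harc1 c)
      omega
    have hgtc2 : ∀ d : {y // y ∈ M2.children M2.root}, M2.hgt d.1 ≤ m := by
      intro d
      have := hgt_lt_of_arc (harc2 d)
      omega
    have hiso : ∀ c : {x // x ∈ M1.children M1.root},
        MulIso (M1.sub c.1) (M2.sub (σ c).1) := by
      intro c
      refine IH (Fintype.card (M1.sub c.1).V) ?_ _ _ rfl
        ⟨m, ?_, ?_, ?_⟩
      · rw [← hcard]
        exact card_sub_lt M1 c.1 (child_ne_root (harc1 c))
      · rw [hgt_sub]
        exact hgtc1 c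
      · rw [hgt_sub]
        exact hgtc2 (σ c)
      · rw [mulNL_sub, mulNL_sub]
        exact hσ c
    let Φ := fun c : {x // x ∈ M1.children M1.root} => (hiso c).choose
    have hΦ := fun c : {x // x ∈ M1.children M1.root} => (hiso c).choose_spec
    let pick := fun (v : M1.V) (hv : v ≠ M1.root) =>
      Classical.choose (exists_root_child hv)
    have pickspec : ∀ (v : M1.V) (hv : v ≠ M1.root),
        M1.arc M1.root (pick v hv) ∧ M1.reach (pick v hv) v :=
      fun v hv => Classical.choose_spec (exists_root_child hv)
    have pickmem : ∀ (v : M1.V) (hv : v ≠ M1.root), pick v hv ∈ M1.children M1.root :=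
      fun v hv => Finset.mem_val.mpr (mem_childFS.mpr (pickspec v hv).1)
    let f : M1.V → M2.V := fun v =>
      if hv : v = M1.root then M2.root
      else (Φ ⟨pick v hv, pickmem v hv⟩ ⟨v, (pickspec v hv).2⟩).1
    have froot : f M1.root = M2.root := dif_pos rfl
    have Φcongr : ∀ (c c' : {x // x ∈ M1.children M1.root}) (_ : c = c')
        (x : (M1.sub c.1).V) (x' : (M1.sub c'.1).V) (_ : x.1 = x'.1),
        (Φ c x).1 = (Φ c' x').1 := by
      rintro c c' rfl x x' hx
      rw [Subtype.ext hx]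
    have fval : ∀ (v : M1.V) (hv : v ≠ M1.root) (c : {x // x ∈ M1.children M1.root})
        (hr : M1.reach c.1 v), f v = (Φ c ⟨v, hr⟩).1 := by
      intro v hv c hr
      have h0 : f v = (Φ ⟨pick v hv, pickmem v hv⟩ ⟨v, (pickspec v hv).2⟩).1 := dif_neg hv
      rw [h0]
      have hcc : (⟨pick v hv, pickmem v hv⟩ : {x // x ∈ M1.children M1.root}) = c :=
        Subtype.ext (root_child_unique (pickspec v hv).1 (pickspec v hv).2 (harc1 c) hr)
      exact Φcongr _ _ hcc _ _ rfl
    have freach : ∀ (v : M1.V) (hv : v ≠ M1.root) (c : {x // x ∈ M1.children M1.root})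
        (hr : M1.reach c.1 v), M2.reach (σ c).1 (f v) := by
      intro v hv c hr
      rw [fval v hv c hr]
      exact (Φ c ⟨v, hr⟩).2
    have fne : ∀ (v : M1.V) (hv : v ≠ M1.root), f v ≠ M2.root := by
      intro v hv hfv
      have hc := freach v hv ⟨pick v hv, pickmem v hv⟩ (pickspec v hv).2
      rw [hfv] at hc
      exact not_reach_root (child_ne_root (harc2 _)) hc
    have fchild : ∀ c : {x // x ∈ M1.children M1.root}, f c.1 = (σ c).1 := by
      intro c
      rw [fval c.1 (child_ne_root (harc1 c)) c Relation.ReflTransGen.refl]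
      exact congrArg Subtype.val (hΦ c).2.1
    have hbij : Function.Bijective f := by
      constructor
      · intro u v huv
        by_cases hu : u = M1.root <;> by_cases hv : v = M1.root
        · rw [hu, hv]
        · rw [hu, froot] at huv
          exact absurd huv.symm (fne v hv)
        · rw [hv, froot] at huv
          exact absurd huv (fne u hu)
        · have hru := (pickspec u hu).2
          have hrv := (pickspec v hv).2
          have hr2u := freach u hu ⟨pick u hu, pickmem u hu⟩ hru
          have hr2v := freach v hv ⟨pick v hv, pickmem v hv⟩ hrv
          rw [huv] at hr2u
          have hσeq : σ ⟨pick u hu, pickmem u hu⟩ = σ ⟨pick v hv, pickmem v hv⟩ :=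
            Subtype.ext (root_child_unique (harc2 _) hr2u (harc2 _) hr2v)
          have hceq : (⟨pick u hu, pickmem u hu⟩ : {x // x ∈ M1.children M1.root})
              = ⟨pick v hv, pickmem v hv⟩ := σ.injective hσeq
          have hrv' : M1.reach (⟨pick u hu, pickmem u hu⟩ :
              {x // x ∈ M1.children M1.root}).1 v := by
            rw [hceq]
            exact hrv
          rw [fval u hu ⟨pick u hu, pickmem u hu⟩ hru, fval v hv ⟨pick u hu, pickmem u hu⟩ hrv'] at huv
          have := (Φ _).injective (Subtype.ext huv)
          exact congrArg Subtype.val this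
      · intro w
        by_cases hw : w = M2.root
        · exact ⟨M1.root, froot.trans hw.symm⟩
        · obtain ⟨d, hd1, hd2⟩ := exists_root_child hw
          have hdmem : d ∈ M2.children M2.root := Finset.mem_val.mpr (mem_childFS.mpr hd1)
          let c := σ.symm ⟨d, hdmem⟩
          have hwreach : M2.reach (σ c).1 w := by
            show M2.reach (σ (σ.symm ⟨d, hdmem⟩)).1 w
            rw [σ.apply_symm_apply]
            exact hd2
          let x := (Φ c).symm ⟨w, hwreach⟩
          have hvne : x.1 ≠ M1.root := by
            intro hx
            have h5 := x.2
            rw [hx] at h5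
            exact not_reach_root (child_ne_root (harc1 c)) h5
          refine ⟨x.1, ?_⟩
          rw [fval x.1 hvne c x.2]
          show (Φ c ((Φ c).symm ⟨w, hwreach⟩)).1 = w
          exact congrArg Subtype.val (Equiv.apply_symm_apply (Φ c) ⟨w, hwreach⟩)
    refine ⟨Equiv.ofBijective f hbij, ?_, froot, ?_⟩
    · intro u v
      show M1.arc u v ↔ M2.arc (f u) (f v)
      constructor
      · intro h
        by_cases hu : u = M1.root
        · rw [hu] at h
          have hvmem : v ∈ M1.children M1.root := Finset.mem_val.mpr (mem_childFS.mpr h)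
          have h6 : f v = (σ ⟨v, hvmem⟩).1 := fchild ⟨v, hvmem⟩
          rw [hu, froot, h6]
          exact harc2 _
        · have hvne : v ≠ M1.root := fun hv => not_arc_root (hv ▸ h)
          have hru := (pickspec u hu).2
          have hrv : M1.reach (pick u hu) v := hru.tail h
          rw [fval u hu ⟨pick u hu, pickmem u hu⟩ hru,
            fval v hvne ⟨pick u hu, pickmem u hu⟩ hrv]
          exact ((hΦ ⟨pick u hu, pickmem u hu⟩).1 ⟨u, hru⟩ ⟨v, hrv⟩).mp h
      · intro h
        by_cases hu : u = M1.root
        · rw [hu, froot] at h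
          by_cases hv : v = M1.root
          · rw [hv, froot] at h
            exact absurd (Relation.TransGen.single h) (M2.acyclic M2.root)
          · -- v is in the subtree of pick v; f v must equal (σ cv).1
            have hrv := (pickspec v hv).2
            have hr2 := freach v hv ⟨pick v hv, pickmem v hv⟩ hrv
            have h7 : (σ ⟨pick v hv, pickmem v hv⟩).1 = f v :=
              root_child_unique (harc2 _) hr2 h Relation.ReflTransGen.refl
            have h8 : f v = (Φ ⟨pick v hv, pickmem v hv⟩ ⟨v, hrv⟩).1 := fval v hv _ hrv
            have h9 : (Φ ⟨pick v hv, pickmem v hv⟩ ⟨v, hrv⟩).1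
                = ((M2.sub (σ ⟨pick v hv, pickmem v hv⟩).1).root).1 := by
              rw [← h8, ← h7]
              rfl
            have h10 : Φ ⟨pick v hv, pickmem v hv⟩ ⟨v, hrv⟩
                = Φ ⟨pick v hv, pickmem v hv⟩ (M1.sub (pick v hv)).root := by
              apply Subtype.ext
              rw [h9, (hΦ ⟨pick v hv, pickmem v hv⟩).2.1]
            have h11 := (Φ _).injective h10
            have h12 : v = pick v hv := congrArg Subtype.val h11
            rw [hu, h12]
            exact (pickspec v hv).1
        · by_cases hv : v = M1.root
          · rw [hv, froot] at h
            exact absurd h not_arc_root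
          · have hru := (pickspec u hu).2
            have hrv := (pickspec v hv).2
            have hr2u := freach u hu ⟨pick u hu, pickmem u hu⟩ hru
            have hr2v := freach v hv ⟨pick v hv, pickmem v hv⟩ hrv
            have hr2v' : M2.reach (σ ⟨pick u hu, pickmem u hu⟩).1 (f v) := hr2u.tail h
            have hσeq : σ ⟨pick u hu, pickmem u hu⟩ = σ ⟨pick v hv, pickmem v hv⟩ :=
              Subtype.ext (root_child_unique (harc2 _) hr2v' (harc2 _) hr2v)
            have hceq : (⟨pick u hu, pickmem u hu⟩ : {x // x ∈ M1.children M1.root})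
                = ⟨pick v hv, pickmem v hv⟩ := σ.injective hσeq
            have hrv' : M1.reach (⟨pick u hu, pickmem u hu⟩ :
                {x // x ∈ M1.children M1.root}).1 v := by
              rw [hceq]
              exact hrv
            rw [fval u hu ⟨pick u hu, pickmem u hu⟩ hru, fval v hv ⟨pick u hu, pickmem u hu⟩ hrv'] at h
            exact ((hΦ ⟨pick u hu, pickmem u hu⟩).1 ⟨u, hru⟩ ⟨v, hrv'⟩).mpr h
    · intro v hv
      show M2.lab (f v) = M1.lab v
      have hvne : v ≠ M1.root := by
        rintro rfl
        exact hleaf hv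
      have hrv := (pickspec v hvne).2
      rw [fval v hvne ⟨pick v hvne, pickmem v hvne⟩ hrv]
      have hsl : (M1.sub (pick v hvne)).IsLeaf ⟨v, hrv⟩ :=
        (sub_isLeaf M1 _ _).mpr hv
      exact (hΦ ⟨pick v hvne, pickmem v hvne⟩).2.2 ⟨v, hrv⟩ hsl

/-- If two MUL-trees over the same label set have the same nested labels
representation, `Υ(M1) = Υ(M2)`, then they are isomorphic as leaf-labeled
rooted trees. -/
theorem mulUpsilon_eq_imp_iso (M1 M2 : MulTree S)
    (h : mulUpsilon M1 (mulFuel M1 M2) = mulUpsilon M2 (mulFuel M1 M2)) :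
    MulIso M1 M2 := by
  set N := mulFuel M1 M2 with hNdef
  have hN1 : ∀ v : M1.V, M1.hgt v ≤ N := by
    intro v
    have := M1.hgt_lt_card v
    have h2 : Fintype.card M1.V ≤ N := Nat.le_add_right _ _
    omega
  have hN2 : ∀ v : M2.V, M2.hgt v ≤ N := by
    intro v
    have := M2.hgt_lt_card v
    have h2 : Fintype.card M2.V ≤ N := Nat.le_add_left _ _
    omega
  have hmem1 : mulNL M1 N M1.root ∈ mulUpsilon M2 N := by
    rw [← h]
    exact Multiset.mem_map_of_mem _ (Finset.mem_val.mpr (Finset.mem_univ _))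
  have hmem2 : mulNL M2 N M2.root ∈ mulUpsilon M1 N := by
    rw [h]
    exact Multiset.mem_map_of_mem _ (Finset.mem_val.mpr (Finset.mem_univ _))
  obtain ⟨w, _, hw⟩ := Multiset.mem_map.mp hmem1
  obtain ⟨u, _, hu⟩ := Multiset.mem_map.mp hmem2
  -- rank computations
  have hrw : M2.hgt w = M1.hgt M1.root := by
    have e1 := MulTree.nrank_mulNL M2 N w (hN2 w)
    have e2 := MulTree.nrank_mulNL M1 N M1.root (hN1 M1.root)
    rw [hw] at e1
    rw [e2] at e1
    exact e1.symm
  have hru : M1.hgt u = M2.hgt M2.root := by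
    have e1 := MulTree.nrank_mulNL M1 N u (hN1 u)
    have e2 := MulTree.nrank_mulNL M2 N M2.root (hN2 M2.root)
    rw [hu] at e1
    rw [e2] at e1
    exact e1.symm
  have hmax1 : ∀ v : M1.V, M1.hgt v ≤ M1.hgt M1.root :=
    fun v => MulTree.hgt_le_of_reach (M1.rootConn v)
  have hmax2 : ∀ v : M2.V, M2.hgt v ≤ M2.hgt M2.root :=
    fun v => MulTree.hgt_le_of_reach (M2.rootConn v)
  have hroots : M2.hgt w = M2.hgt M2.root := by
    have a1 : M2.hgt M2.root ≤ M1.hgt M1.root := hru ▸ hmax1 u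
    have a2 : M2.hgt w ≤ M2.hgt M2.root := hmax2 w
    omega
  have hwroot : w = M2.root := by
    by_contra hne
    have := MulTree.hgt_lt_of_transGen (MulTree.transGen_of_reach_ne (M2.rootConn w) (Ne.symm hne))
    omega
  subst hwroot
  exact mul_iso_of_same_root_nl (Fintype.card M1.V) M1 M2 rfl
    ⟨N, hN1 M1.root, hN2 M2.root, hw.symm⟩
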